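/- Let d, n ≥ 1, let Σ₀ be a positive definite real d×d matrix, τ₀ ∈ ℝ^d, X ∈ ℝ^{n×d} and Y ∈ ℝ^n, and set Σ = (Σ₀⁻¹ + XᵀX)⁻¹ and τ = Σ(Σ₀⁻¹ τ₀ + Xᵀ Y). Then τ₀ᵀ Σ₀⁻¹ τ₀ + Yᵀ Y − τᵀ Σ⁻¹ τ = (τ − τ₀)ᵀ Σ₀⁻¹ (τ − τ₀) + ‖Y − Xτ‖² ≥ 0; consequently, for any b₀ > 0 the updated scale parameter b* = b₀ + (1/2)(τ₀ᵀ Σ₀⁻¹ τ₀ + Yᵀ Y − τᵀ Σ⁻¹ τ) satisfies b* ≥ b₀ > 0, so the posterior normal-inverse-gamma distribution in Proposition 2 is well defined. -/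

import Mathlib

open Matrix

/-! Since `S⁻¹ = S₀⁻¹ + XᵀX`, the vector `τ` solves the normal equations
`(S₀⁻¹ + XᵀX) τ = S₀⁻¹ τ₀ + XᵀY`. Completing the square with the help of these equations turns
`τ₀ᵀ S₀⁻¹ τ₀ + YᵀY − τᵀ S⁻¹ τ` into a sum of a quadratic form of the positive definite `S₀⁻¹`
and a squared norm. -/

namespace Matrix

variable {m n R : Type*} [Fintype m] [Fintype n]

theorem IsSymm.dotProduct_mulVec_comm [CommSemiring R] {M : Matrix m m R} (hM : M.IsSymm)
    (u v : m → R) : u ⬝ᵥ (M *ᵥ v) = v ⬝ᵥ (M *ᵥ u) := by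
  rw [dotProduct_mulVec, ← mulVec_transpose, hM.eq, dotProduct_comm]

theorem mulVec_dotProduct_mulVec [CommSemiring R] (X : Matrix n m R) (u v : m → R) :
    (X *ᵥ u) ⬝ᵥ (X *ᵥ v) = u ⬝ᵥ ((Xᵀ * X) *ᵥ v) := by
  rw [← mulVec_mulVec, dotProduct_mulVec u, vecMul_transpose]

theorem dotProduct_mulVec_transpose [CommSemiring R] (X : Matrix n m R) (u : m → R)
    (Y : n → R) : Y ⬝ᵥ (X *ᵥ u) = u ⬝ᵥ (Xᵀ *ᵥ Y) := by
  rw [dotProduct_mulVec, ← mulVec_transpose, dotProduct_comm]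

theorem completeSquare_of_normalEquations [CommRing R] {M : Matrix m m R} (hM : M.IsSymm)
    (X : Matrix n m R) (τ₀ τ : m → R) (Y : n → R)
    (hτ : (M + Xᵀ * X) *ᵥ τ = M *ᵥ τ₀ + Xᵀ *ᵥ Y) :
    τ₀ ⬝ᵥ (M *ᵥ τ₀) + Y ⬝ᵥ Y - τ ⬝ᵥ ((M + Xᵀ * X) *ᵥ τ) =
      (τ - τ₀) ⬝ᵥ (M *ᵥ (τ - τ₀)) + (Y - X *ᵥ τ) ⬝ᵥ (Y - X *ᵥ τ) := by
  have hτ' : τ ⬝ᵥ (M *ᵥ τ) + (X *ᵥ τ) ⬝ᵥ (X *ᵥ τ) = τ ⬝ᵥ (M *ᵥ τ₀) + τ ⬝ᵥ (Xᵀ *ᵥ Y) := by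
    rw [mulVec_dotProduct_mulVec, ← dotProduct_add, ← add_mulVec, hτ, dotProduct_add]
  have hM₀ := hM.dotProduct_mulVec_comm τ₀ τ
  have hY := dotProduct_mulVec_transpose X τ Y
  rw [hτ]
  simp only [mulVec_sub, dotProduct_sub, sub_dotProduct, dotProduct_add]
  rw [dotProduct_comm (X *ᵥ τ) Y]
  linear_combination -hτ' + hM₀ + 2 * hY

end Matrix

theorem bstar_pos_general {d n : ℕ}
    (S₀ : Matrix (Fin d) (Fin d) ℝ) (hS₀ : S₀.PosDef)
    (τ₀ : Fin d → ℝ) (X : Matrix (Fin n) (Fin d) ℝ) (Y : Fin n → ℝ)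
    (S : Matrix (Fin d) (Fin d) ℝ) (hS : S = (S₀⁻¹ + Xᵀ * X)⁻¹)
    (τ : Fin d → ℝ) (hτ : τ = S *ᵥ (S₀⁻¹ *ᵥ τ₀ + Xᵀ *ᵥ Y)) :
    (τ₀ ⬝ᵥ (S₀⁻¹ *ᵥ τ₀) + Y ⬝ᵥ Y - τ ⬝ᵥ (S⁻¹ *ᵥ τ) =
        (τ - τ₀) ⬝ᵥ (S₀⁻¹ *ᵥ (τ - τ₀)) + (Y - X *ᵥ τ) ⬝ᵥ (Y - X *ᵥ τ)) ∧
      0 ≤ τ₀ ⬝ᵥ (S₀⁻¹ *ᵥ τ₀) + Y ⬝ᵥ Y - τ ⬝ᵥ (S⁻¹ *ᵥ τ) ∧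
      ∀ b₀ : ℝ, 0 < b₀ →
        b₀ ≤ b₀ + (1/2) * (τ₀ ⬝ᵥ (S₀⁻¹ *ᵥ τ₀) + Y ⬝ᵥ Y - τ ⬝ᵥ (S⁻¹ *ᵥ τ)) ∧
        0 < b₀ + (1/2) * (τ₀ ⬝ᵥ (S₀⁻¹ *ᵥ τ₀) + Y ⬝ᵥ Y - τ ⬝ᵥ (S⁻¹ *ᵥ τ)) := by
  have hXX : (Xᵀ * X).PosSemidef := by
    simpa using posSemidef_conjTranspose_mul_self X
  have hdet : IsUnit (S₀⁻¹ + Xᵀ * X).det :=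
    (isUnit_iff_isUnit_det _).mp (hS₀.inv.add_posSemidef hXX).isUnit
  have hSinv : S⁻¹ = S₀⁻¹ + Xᵀ * X := by rw [hS, nonsing_inv_nonsing_inv _ hdet]
  have hnormal : S⁻¹ *ᵥ τ = S₀⁻¹ *ᵥ τ₀ + Xᵀ *ᵥ Y := by
    rw [hτ, mulVec_mulVec, hSinv, hS, mul_nonsing_inv _ hdet, one_mulVec]
  have hsquare := completeSquare_of_normalEquations
    (isHermitian_iff_isSymm.mp hS₀.inv.isHermitian) X τ₀ τ Y (hSinv ▸ hnormal)
  rw [← hSinv] at hsquare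
  have hnonneg : 0 ≤ (τ - τ₀) ⬝ᵥ (S₀⁻¹ *ᵥ (τ - τ₀)) + (Y - X *ᵥ τ) ⬝ᵥ (Y - X *ᵥ τ) :=
    add_nonneg (by simpa using hS₀.inv.posSemidef.dotProduct_mulVec_nonneg (τ - τ₀))
      (by simpa using dotProduct_self_star_nonneg (Y - X *ᵥ τ))
  refine ⟨hsquare, hsquare ▸ hnonneg, fun b₀ hb₀ => ⟨?_, ?_⟩⟩ <;> linarith

/-- with `S = (S₀⁻¹ + Xᵀ X)⁻¹` and `τ = S (S₀⁻¹ τ₀ + Xᵀ Y)`,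
`τ₀ᵀ S₀⁻¹ τ₀ + Yᵀ Y − τᵀ S⁻¹ τ = (τ − τ₀)ᵀ S₀⁻¹ (τ − τ₀) + ‖Y − Xτ‖² ≥ 0`;
consequently for any `b₀ > 0`, `b* = b₀ + (1/2)(τ₀ᵀ S₀⁻¹ τ₀ + Yᵀ Y − τᵀ S⁻¹ τ)`
satisfies `b* ≥ b₀ > 0`. -/
theorem bstar_pos {d n : ℕ} (hd : 1 ≤ d) (hn : 1 ≤ n)
    (S₀ : Matrix (Fin d) (Fin d) ℝ) (hS₀ : S₀.PosDef)
    (τ₀ : Fin d → ℝ) (X : Matrix (Fin n) (Fin d) ℝ) (Y : Fin n → ℝ)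
    (S : Matrix (Fin d) (Fin d) ℝ) (hS : S = (S₀⁻¹ + Xᵀ * X)⁻¹)
    (τ : Fin d → ℝ) (hτ : τ = S *ᵥ (S₀⁻¹ *ᵥ τ₀ + Xᵀ *ᵥ Y)) :
    (τ₀ ⬝ᵥ (S₀⁻¹ *ᵥ τ₀) + Y ⬝ᵥ Y - τ ⬝ᵥ (S⁻¹ *ᵥ τ) =
        (τ - τ₀) ⬝ᵥ (S₀⁻¹ *ᵥ (τ - τ₀)) + (Y - X *ᵥ τ) ⬝ᵥ (Y - X *ᵥ τ)) ∧
      0 ≤ τ₀ ⬝ᵥ (S₀⁻¹ *ᵥ τ₀) + Y ⬝ᵥ Y - τ ⬝ᵥ (S⁻¹ *ᵥ τ) ∧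
      ∀ b₀ : ℝ, 0 < b₀ →
        b₀ ≤ b₀ + (1/2) * (τ₀ ⬝ᵥ (S₀⁻¹ *ᵥ τ₀) + Y ⬝ᵥ Y - τ ⬝ᵥ (S⁻¹ *ᵥ τ)) ∧
        0 < b₀ + (1/2) * (τ₀ ⬝ᵥ (S₀⁻¹ *ᵥ τ₀) + Y ⬝ᵥ Y - τ ⬝ᵥ (S⁻¹ *ᵥ τ)) :=
  bstar_pos_general S₀ hS₀ τ₀ X Y S hS τ hτ
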